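/- Torsor structure on lifts: let B be a DG algebra, R artinian with m^{n+1} = 0, I = m^n, and ξ ∈ MC(B ⊗ m/I). If α ∈ MC(B ⊗ m) lifts ξ and η ∈ (B ⊗ I)^1 is a cocycle (dη = 0), then α + η ∈ MC(B ⊗ m) also lifts ξ. Conversely, if α, β ∈ MC(B ⊗ m) both lift ξ, then α − β ∈ (B ⊗ I)^1 satisfies d(α − β) = 0. Thus Z¹(B ⊗ I) acts simply transitively on the set of lifts of ξ. -/

import Mathlib

/-!
Every element of `J` annihilates `N` on both sides, so for lifts `α, β ∈ N` with `α - β ∈ J` the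
quadratic term of the Maurer–Cartan equation is blind to the difference: `(α + η)² = α²` and
`α² = β²`. The Maurer–Cartan equations of `α` and of `α + η`, resp. of `α` and `β`, then differ
only by the linear term `d η`, resp. `d (α - β)`.
-/

section MaurerCartan

variable {R F : Type*}

def IsMaurerCartan [NonUnitalNonAssocSemiring R] [FunLike F R R] (d : F) (α : R) : Prop :=
  d α + α * α = 0

theorem add_mul_self_eq_mul_self_of_mul_eq_zero [NonUnitalNonAssocSemiring R] {x y : R}
    (hxy : x * y = 0) (hyx : y * x = 0) (hyy : y * y = 0) : (x + y) * (x + y) = x * x := by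
  rw [add_mul, mul_add, mul_add, hxy, hyx, hyy, add_zero, add_zero, add_zero]

theorem mul_self_eq_mul_self_of_sub_mul_eq_zero [NonUnitalNonAssocRing R] {a b : R}
    (hleft : a * (a - b) = 0) (hright : (a - b) * b = 0) : a * a = b * b := by
  rw [mul_sub, sub_eq_zero] at hleft
  rw [sub_mul, sub_eq_zero] at hright
  rw [hleft, hright]

theorem IsMaurerCartan.add_of_mul_eq_zero [NonUnitalNonAssocSemiring R] [FunLike F R R]
    [AddMonoidHomClass F R R] {d : F} {α η : R} (hα : IsMaurerCartan d α) (hdη : d η = 0)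
    (hαη : α * η = 0) (hηα : η * α = 0) (hηη : η * η = 0) : IsMaurerCartan d (α + η) := by
  rw [IsMaurerCartan, map_add, hdη, add_zero,
    add_mul_self_eq_mul_self_of_mul_eq_zero hαη hηα hηη]
  exact hα

theorem IsMaurerCartan.map_sub_eq_zero [NonUnitalNonAssocRing R] [FunLike F R R]
    [AddMonoidHomClass F R R] {d : F} {α β : R} (hα : IsMaurerCartan d α)
    (hβ : IsMaurerCartan d β) (hleft : α * (α - β) = 0) (hright : (α - β) * β = 0) :
    d (α - β) = 0 := by
  have hsq := mul_self_eq_mul_self_of_sub_mul_eq_zero hleft hright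
  rw [IsMaurerCartan, hsq] at hα
  rw [map_sub, eq_neg_of_add_eq_zero_left hα, eq_neg_of_add_eq_zero_left hβ, sub_self]

end MaurerCartan

theorem statement_7_general
    (k : Type) [Field k] (T : Type) [Ring T] [Algebra k T]
    (𝒜 : ℤ → Submodule k T) (d : T →ₗ[k] T)
    (N J : Submodule k T)
    (hJN : J ≤ N)
    (hJNzero : ∀ x ∈ J, ∀ y ∈ N, x * y = 0 ∧ y * x = 0) :
    -- action of Z¹(B ⊗ I) on the set of lifts:
    (∀ α η : T, α ∈ N → α ∈ 𝒜 1 → d α + α * α = 0 →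
        η ∈ J → η ∈ 𝒜 1 → d η = 0 →
        (d (α + η) + (α + η) * (α + η) = 0 ∧ (α + η) ∈ N ∧ (α + η) ∈ 𝒜 1 ∧
          (α + η) - α ∈ J)) ∧
    -- transitivity: the difference of two lifts is a cocycle in (B ⊗ I)¹:
    (∀ α β : T, α ∈ N → α ∈ 𝒜 1 → d α + α * α = 0 →
        β ∈ N → β ∈ 𝒜 1 → d β + β * β = 0 →
        α - β ∈ J → d (α - β) = 0) := by
  constructor
  · intro α η hαN hα1 hα hηJ hη1 hdη
    refine ⟨?_, N.add_mem hαN (hJN hηJ), (𝒜 1).add_mem hα1 hη1, by simpa using hηJ⟩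
    exact IsMaurerCartan.add_of_mul_eq_zero (d := d) hα hdη (hJNzero η hηJ α hαN).2
      (hJNzero η hηJ α hαN).1 (hJNzero η hηJ η (hJN hηJ)).1
  · intro α β hαN _ hα hβN _ hβ hαβ
    exact IsMaurerCartan.map_sub_eq_zero (d := d) hα hβ (hJNzero _ hαβ α hαN).2
      (hJNzero _ hαβ β hβN).1

/-- (Torsor structure on the set of lifts.)
Let `B` be a DG algebra, `R` artinian with `m^(n+1) = 0`, `I = mⁿ`, and
`ξ ∈ MC(B ⊗ m/I)`.  If `α ∈ MC(B ⊗ m)` lifts `ξ` and `η ∈ (B ⊗ I)¹` is a cocycle,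
then `α + η ∈ MC(B ⊗ m)` also lifts `ξ`.  Conversely, if `α, β ∈ MC(B ⊗ m)` both
lift `ξ`, then `α − β ∈ (B ⊗ I)¹` satisfies `d(α − β) = 0`.  Thus `Z¹(B ⊗ I)` acts
simply transitively on the set of lifts of `ξ`.

Encoding: `T = B ⊗ R` is a DG algebra with grading `𝒜` and differential `d`;
`N = B ⊗ m` and `J = B ⊗ I` are two-sided DG ideals with `J ≤ N` and
`J·N = N·J = 0`.  "Both lift `ξ`" is expressed by `α − β ∈ J`. -/
theorem statement_7
    (k : Type) [Field k] (T : Type) [Ring T] [Algebra k T]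
    (𝒜 : ℤ → Submodule k T) (d : T →ₗ[k] T)
    (hone : (1 : T) ∈ 𝒜 0)
    (hmul : ∀ i j : ℤ, ∀ a ∈ 𝒜 i, ∀ b ∈ 𝒜 j, a * b ∈ 𝒜 (i + j))
    (hd_deg : ∀ i : ℤ, ∀ a ∈ 𝒜 i, d a ∈ 𝒜 (i + 1))
    (hd_sq : ∀ a : T, d (d a) = 0)
    (hd_one : d (1 : T) = 0)
    (hleib : ∀ i : ℤ, ∀ a ∈ 𝒜 i, ∀ b : T,
      d (a * b) = d a * b + ((-1 : k) ^ i) • (a * d b))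
    (N J : Submodule k T)
    (hJN : J ≤ N)
    (hNleft : ∀ a ∈ N, ∀ r : T, r * a ∈ N) (hNright : ∀ a ∈ N, ∀ r : T, a * r ∈ N)
    (hJleft : ∀ a ∈ J, ∀ r : T, r * a ∈ J) (hJright : ∀ a ∈ J, ∀ r : T, a * r ∈ J)
    (hNd : ∀ a ∈ N, d a ∈ N) (hJd : ∀ a ∈ J, d a ∈ J)
    (hJNzero : ∀ x ∈ J, ∀ y ∈ N, x * y = 0 ∧ y * x = 0) :
    -- action of Z¹(B ⊗ I) on the set of lifts:
    (∀ α η : T, α ∈ N → α ∈ 𝒜 1 → d α + α * α = 0 →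
        η ∈ J → η ∈ 𝒜 1 → d η = 0 →
        (d (α + η) + (α + η) * (α + η) = 0 ∧ (α + η) ∈ N ∧ (α + η) ∈ 𝒜 1 ∧
          (α + η) - α ∈ J)) ∧
    -- transitivity: the difference of two lifts is a cocycle in (B ⊗ I)¹:
    (∀ α β : T, α ∈ N → α ∈ 𝒜 1 → d α + α * α = 0 →
        β ∈ N → β ∈ 𝒜 1 → d β + β * β = 0 →
        α - β ∈ J → d (α - β) = 0) :=
  statement_7_general k T 𝒜 d N J hJN hJNzero
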